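/- Let J, μ, γ, m, δ_m, and C^mid_{μ,m}(J) be as in the midpoint Cantor construction. Then for every open subinterval I ⊆ J and every δ ∈ (0,|I|): N(C^mid_{μ,m}(J) ∩ I, δ) ≤ 8 δ^{-γ}|I|^γ if δ_m ≤ δ ≤ |I|; N(C^mid_{μ,m}(J) ∩ I, δ) ≤ 4 δ_m^{-γ}|I|^γ if δ ≤ δ_m ≤ |I|; and N(C^mid_{μ,m}(J) ∩ I, δ) ≤ 1 if |I| < δ_m. -/

import Mathlib

/-- Minimal number of closed intervals of length `δ` needed to cover `E`. -/
noncomputable def covN (E : Set ℝ) (δ : ℝ) : ℕ :=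
  sInf {n : ℕ | ∃ c : Fin n → ℝ, E ⊆ ⋃ i, Set.Icc (c i) (c i + δ)}

/-- The set of midpoints of the `2^m` intervals of the `m`-th generation of the
middle-piece Cantor construction with ratio `μ` on the interval `[a, a+L]`. -/
noncomputable def cantorMid (μ a L : ℝ) (m : ℕ) : Set ℝ :=
  {x | ∃ σ : Fin m → Bool,
    x = a + L * (∑ i : Fin m, (if σ i then (1 - μ) * μ ^ (i : ℕ) else 0)) + μ ^ m * L / 2}


/-!
Since `μ ≤ 1/2`, the left endpoints of the generation-`k` intervals (of length `μ^k L`) are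
`μ^k L` apart, so an interval shorter than `μ^k L` meets at most two of them, and hence at most
`2 · 2^(n-k)` intervals of any later generation `n`. Cover `C^mid_{μ,m}(J) ∩ I` by the
generation-`k` intervals with `μ^k L ≈ δ` when `δ ≥ δ_m`, and by the midpoints themselves when
`δ ≤ δ_m`; the identity `(1/μ)^γ = 2` turns `2^(n-k)` into `(|I|/δ)^γ`. When `|I| < δ_m` the
`δ_m`-separation of the midpoints leaves at most one of them in `I`.
-/

open Set

noncomputable def cantorCode (μ : ℝ) {k : ℕ} (σ : Fin k → Bool) : ℝ :=
  ∑ i : Fin k, if σ i then (1 - μ) * μ ^ (i : ℕ) else 0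

noncomputable def cantorLeft (μ a L : ℝ) {k : ℕ} (σ : Fin k → Bool) : ℝ :=
  a + L * cantorCode μ σ

def cantorInterval (μ a L : ℝ) {k : ℕ} (σ : Fin k → Bool) : Set ℝ :=
  Icc (cantorLeft μ a L σ) (cantorLeft μ a L σ + μ ^ k * L)

noncomputable def cantorMidpoint (μ a L : ℝ) {k : ℕ} (σ : Fin k → Bool) : ℝ :=
  cantorLeft μ a L σ + μ ^ k * L / 2

open Classical in
noncomputable def meetingCodes (μ a L x y : ℝ) (k : ℕ) : Finset (Fin k → Bool) :=
  Finset.univ.filter fun σ => (cantorInterval μ a L σ ∩ Ioo x y).Nonempty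

section CantorCode

variable {μ a L : ℝ} {k m : ℕ}

@[simp]
theorem cantorCode_zero (σ : Fin 0 → Bool) : cantorCode μ σ = 0 := by
  simp [cantorCode]

theorem cantorCode_succ_init (σ : Fin (k + 1) → Bool) :
    cantorCode μ σ = cantorCode μ (Fin.init σ) + if σ (Fin.last k) then (1 - μ) * μ ^ k else 0 := by
  rw [cantorCode, Fin.sum_univ_castSucc]
  rfl

theorem cantorCode_succ_tail (σ : Fin (k + 1) → Bool) :
    cantorCode μ σ = (if σ 0 then 1 - μ else 0) + μ * cantorCode μ (Fin.tail σ) := by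
  rw [cantorCode, Fin.sum_univ_succ, cantorCode, Finset.mul_sum]
  congr 1
  · simp
  · refine Finset.sum_congr rfl fun i _ => ?_
    by_cases h : σ i.succ <;> simp [h, Fin.tail, pow_succ', mul_left_comm]

theorem cantorInterval_subset_init (hμ0 : 0 ≤ μ) (hμ1 : μ ≤ 1) (hL : 0 ≤ L)
    (σ : Fin (k + 1) → Bool) : cantorInterval μ a L σ ⊆ cantorInterval μ a L (Fin.init σ) := by
  have hdigit : cantorLeft μ a L σ = cantorLeft μ a L (Fin.init σ) +
      L * if σ (Fin.last k) then (1 - μ) * μ ^ k else 0 := by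
    rw [cantorLeft, cantorLeft, cantorCode_succ_init]; ring
  have hpow : 0 ≤ μ ^ k * L := by positivity
  have hpow_succ : μ ^ (k + 1) * L = μ * (μ ^ k * L) := by ring
  refine Icc_subset_Icc ?_ ?_ <;> rw [hdigit] <;> split_ifs <;> nlinarith

theorem exists_cantorInterval_superset (hμ0 : 0 ≤ μ) (hμ1 : μ ≤ 1) (hL : 0 ≤ L) (hkm : k ≤ m)
    (σ : Fin m → Bool) : ∃ τ : Fin k → Bool, cantorInterval μ a L σ ⊆ cantorInterval μ a L τ := by
  induction m, hkm using Nat.le_induction with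
  | base => exact ⟨σ, subset_rfl⟩
  | succ n _ ih =>
    obtain ⟨τ, hτ⟩ := ih (Fin.init σ)
    exact ⟨τ, (cantorInterval_subset_init hμ0 hμ1 hL σ).trans hτ⟩

theorem cantorCode_nonneg_and_add_pow_le_one (hμ0 : 0 ≤ μ) (hμ1 : μ ≤ 1) (σ : Fin k → Bool) :
    0 ≤ cantorCode μ σ ∧ cantorCode μ σ + μ ^ k ≤ 1 := by
  obtain ⟨τ, hτ⟩ := exists_cantorInterval_superset (a := 0) hμ0 hμ1 zero_le_one (Nat.zero_le k) σ
  have hμk := pow_nonneg hμ0 k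
  have hleft := hτ (left_mem_Icc.mpr (by linarith))
  have hright := hτ (right_mem_Icc.mpr (by linarith))
  simp only [cantorInterval, cantorLeft, cantorCode_zero, mem_Icc] at hleft hright
  constructor <;> linarith

theorem pow_le_abs_cantorCode_sub (hμ0 : 0 ≤ μ) (hμ2 : μ ≤ 1 / 2) :
    ∀ {k : ℕ} {σ τ : Fin k → Bool}, σ ≠ τ → μ ^ k ≤ |cantorCode μ σ - cantorCode μ τ|
  | 0, σ, τ, h => absurd (Subsingleton.elim σ τ) h
  | k + 1, σ, τ, h => by
    rw [cantorCode_succ_tail, cantorCode_succ_tail]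
    by_cases h0 : σ 0 = τ 0
    · have htail : Fin.tail σ ≠ Fin.tail τ := fun ht =>
        h (by rw [← Fin.cons_self_tail σ, ← Fin.cons_self_tail τ, h0, ht])
      rw [h0, add_sub_add_left_eq_sub, ← mul_sub, abs_mul, abs_of_nonneg hμ0, pow_succ']
      exact mul_le_mul_of_nonneg_left (pow_le_abs_cantorCode_sub hμ0 hμ2 htail) hμ0
    · -- codes starting with `false` lie in `[0, μ - μ^(k+1)]`, those starting with `true` in
      -- `[1 - μ, 1]`, and the gap `1 - 2μ + μ^(k+1)` is at least `μ^(k+1)` since `μ ≤ 1/2`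
      have hμ1 : μ ≤ 1 := by linarith
      obtain ⟨hσ0, hσ1⟩ := cantorCode_nonneg_and_add_pow_le_one hμ0 hμ1 (Fin.tail σ)
      obtain ⟨hτ0, hτ1⟩ := cantorCode_nonneg_and_add_pow_le_one hμ0 hμ1 (Fin.tail τ)
      have := mul_nonneg hμ0 hσ0
      have := mul_nonneg hμ0 hτ0
      have := mul_le_mul_of_nonneg_left hσ1 hμ0
      have := mul_le_mul_of_nonneg_left hτ1 hμ0
      rw [le_abs, pow_succ']
      cases hσ : σ 0 <;> cases hτ : τ 0 <;>
        simp only [hσ, hτ, Bool.false_eq_true, if_true, if_false] at h0 ⊢ <;>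
        first | exact absurd trivial h0 | (left; nlinarith) | (right; nlinarith)

theorem pow_mul_le_abs_cantorLeft_sub (hμ0 : 0 ≤ μ) (hμ2 : μ ≤ 1 / 2) (hL : 0 ≤ L)
    {σ τ : Fin k → Bool} (h : σ ≠ τ) :
    μ ^ k * L ≤ |cantorLeft μ a L σ - cantorLeft μ a L τ| := by
  rw [cantorLeft, cantorLeft, add_sub_add_left_eq_sub, ← mul_sub, abs_mul, abs_of_nonneg hL,
    mul_comm]
  exact mul_le_mul_of_nonneg_left (pow_le_abs_cantorCode_sub hμ0 hμ2 h) hL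

theorem cantorMidpoint_mem_cantorInterval (hμ0 : 0 ≤ μ) (hL : 0 ≤ L) (σ : Fin k → Bool) :
    cantorMidpoint μ a L σ ∈ cantorInterval μ a L σ := by
  have := mul_nonneg (pow_nonneg hμ0 k) hL
  constructor <;> unfold cantorMidpoint <;> linarith

end CantorCode

theorem Finset.card_le_of_le_abs_sub {ι : Type*} {s : Finset ι} {f : ι → ℝ} {d u : ℝ} {n : ℕ}
    (hd : 0 < d) (hsep : ∀ i ∈ s, ∀ j ∈ s, i ≠ j → d ≤ |f i - f j|)
    (hs : ∀ i ∈ s, f i ∈ Set.Ico u (u + n * d)) : s.card ≤ n := by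
  -- points in the same cell `[u + c d, u + (c + 1) d)` are closer than `d`
  have hcells : (Finset.Ico (0 : ℤ) n).card = n := by simp
  rw [← hcells]
  refine Finset.card_le_card_of_injOn (fun i => ⌊(f i - u) / d⌋) (fun i hi => ?_) ?_
  · obtain ⟨hu, hn⟩ := hs i hi
    rw [Finset.coe_Ico, Set.mem_Ico, Int.floor_nonneg, Int.floor_lt, div_lt_iff₀ hd]
    exact ⟨div_nonneg (sub_nonneg.mpr hu) hd.le, by push_cast; linarith⟩
  · intro i hi j hj hij
    by_contra hne
    have hclose := Int.abs_sub_lt_one_of_floor_eq_floor hij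
    rw [← sub_div, sub_sub_sub_cancel_right, abs_div, abs_of_pos hd, div_lt_one hd] at hclose
    exact (hsep i hi j hj hne).not_gt hclose

section MeetingCodes

variable {μ a L x y : ℝ} {k m : ℕ}

theorem mem_meetingCodes {σ : Fin k → Bool} :
    σ ∈ meetingCodes μ a L x y k ↔ (cantorInterval μ a L σ ∩ Ioo x y).Nonempty := by
  simp [meetingCodes]

theorem card_meetingCodes_succ_le (hμ0 : 0 ≤ μ) (hμ1 : μ ≤ 1) (hL : 0 ≤ L) :
    (meetingCodes μ a L x y (k + 1)).card ≤ 2 * (meetingCodes μ a L x y k).card := by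
  have hpairs : (meetingCodes μ a L x y k ×ˢ (Finset.univ : Finset Bool)).card =
      2 * (meetingCodes μ a L x y k).card := by
    rw [Finset.card_product, Finset.card_univ, Fintype.card_bool, mul_comm]
  rw [← hpairs]
  refine Finset.card_le_card_of_injOn (fun σ => (Fin.init σ, σ (Fin.last k))) (fun σ hσ => ?_) ?_
  · obtain ⟨z, hz⟩ := mem_meetingCodes.mp hσ
    exact Finset.mem_product.mpr ⟨mem_meetingCodes.mpr
      ⟨z, cantorInterval_subset_init hμ0 hμ1 hL σ hz.1, hz.2⟩, Finset.mem_univ _⟩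
  · intro σ _ τ _ h
    obtain ⟨hinit, hlast⟩ := Prod.ext_iff.mp h
    rw [← Fin.snoc_init_self σ, ← Fin.snoc_init_self τ]
    exact congrArg₂ Fin.snoc hinit hlast

theorem card_meetingCodes_le_two_pow_mul (hμ0 : 0 ≤ μ) (hμ1 : μ ≤ 1) (hL : 0 ≤ L) (hkm : k ≤ m) :
    (meetingCodes μ a L x y m).card ≤ 2 ^ (m - k) * (meetingCodes μ a L x y k).card := by
  induction m, hkm using Nat.le_induction with
  | base => simp
  | succ n hkn ih =>
    rw [Nat.succ_sub hkn, pow_succ', mul_assoc]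
    exact (card_meetingCodes_succ_le hμ0 hμ1 hL).trans (Nat.mul_le_mul_left 2 ih)

theorem card_meetingCodes_le_two (hμ : 0 < μ) (hμ2 : μ ≤ 1 / 2) (hL : 0 < L)
    (h : y - x < μ ^ k * L) : (meetingCodes μ a L x y k).card ≤ 2 := by
  -- the left endpoints are `μ^k L`-separated and lie in `[x - μ^k L, y)`
  refine Finset.card_le_of_le_abs_sub (f := cantorLeft μ a L) (u := x - μ ^ k * L)
    (by positivity) (fun σ _ τ _ hne => pow_mul_le_abs_cantorLeft_sub hμ.le hμ2 hL.le hne)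
    fun σ hσ => ?_
  obtain ⟨z, ⟨hz_left, hz_right⟩, hzx, hzy⟩ := mem_meetingCodes.mp hσ
  constructor <;> push_cast <;> linarith

theorem card_meetingCodes_le_four_mul (hμ : 0 < μ) (hμ2 : μ ≤ 1 / 2) (hL : 0 < L) {j : ℕ}
    (hjk : j ≤ k) (hj : ∀ i < j, y - x < μ ^ i * L) :
    (meetingCodes μ a L x y k).card ≤ 4 * 2 ^ (k - j) := by
  have hμ1 : μ ≤ 1 := by linarith
  cases j with
  | zero =>
    calc (meetingCodes μ a L x y k).card ≤ Fintype.card (Fin k → Bool) := Finset.card_le_univ _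
      _ = 2 ^ k := by simp
      _ ≤ 4 * 2 ^ (k - 0) := by rw [Nat.sub_zero]; omega
  | succ i =>
    calc (meetingCodes μ a L x y k).card ≤ 2 ^ (k - i) * (meetingCodes μ a L x y i).card :=
          card_meetingCodes_le_two_pow_mul hμ.le hμ1 hL.le (by omega)
      _ ≤ 2 ^ (k - i) * 2 :=
          Nat.mul_le_mul_left _ (card_meetingCodes_le_two hμ hμ2 hL (hj i i.lt_succ_self))
      _ = 4 * 2 ^ (k - (i + 1)) := by
          rw [show k - i = k - (i + 1) + 1 by omega, pow_succ]; ring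

end MeetingCodes

theorem covN_le_card {E : Set ℝ} {δ : ℝ} (t : Finset ℝ) (h : E ⊆ ⋃ c ∈ t, Icc c (c + δ)) :
    covN E δ ≤ t.card := by
  refine Nat.sInf_le ⟨fun i => t.equivFin.symm i, fun e he => ?_⟩
  obtain ⟨c, hc, hce⟩ := mem_iUnion₂.mp (h he)
  exact mem_iUnion.mpr ⟨t.equivFin ⟨c, hc⟩, by simpa using hce⟩

theorem exists_minimal_pow_mul_le {μ L t : ℝ} {m : ℕ} (h : μ ^ m * L ≤ t) :
    ∃ k ≤ m, μ ^ k * L ≤ t ∧ ∀ i < k, t < μ ^ i * L := by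
  have hex : ∃ k, μ ^ k * L ≤ t := ⟨m, h⟩
  exact ⟨Nat.find hex, Nat.find_min' hex h, Nat.find_spec hex,
    fun _ hi => not_le.mp (Nat.find_min hex hi)⟩

theorem pow_mul_le_pow_sub_mul {μ L ℓ : ℝ} {j k : ℕ} (hμ0 : 0 ≤ μ) (hjk : j ≤ k)
    (h : μ ^ j * L ≤ ℓ) : μ ^ k * L ≤ μ ^ (k - j) * ℓ :=
  calc μ ^ k * L = μ ^ (k - j) * (μ ^ j * L) := by
        rw [← mul_assoc, ← pow_add, Nat.sub_add_cancel hjk]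
    _ ≤ μ ^ (k - j) * ℓ := by gcongr

theorem two_pow_le_rpow_neg_mul_rpow {μ γ δ ℓ : ℝ} {n : ℕ} (hμ : 0 < μ) (hμ1 : μ < 1)
    (hγ : γ = Real.log 2 / Real.log (1 / μ)) (hδ : 0 < δ) (h : δ ≤ μ ^ n * ℓ) :
    (2 : ℝ) ^ n ≤ δ ^ (-γ) * ℓ ^ γ := by
  have hb : 1 < 1 / μ := one_lt_one_div hμ hμ1
  have hℓ : 0 < ℓ := pos_of_mul_pos_right (hδ.trans_le h) (by positivity)
  have hγ0 : 0 ≤ γ := hγ ▸ div_nonneg (Real.log_nonneg one_le_two) (Real.log_nonneg hb.le)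
  -- `γ = logb (1/μ) 2`
  have hbase : (1 / μ) ^ γ = 2 := hγ ▸ Real.rpow_logb (by positivity) hb.ne' two_pos
  have hratio : (1 / μ) ^ n ≤ ℓ / δ := by
    rw [div_pow, one_pow, div_le_div_iff₀ (by positivity) hδ]
    linarith
  calc (2 : ℝ) ^ n = ((1 / μ) ^ n) ^ γ := by rw [← hbase, Real.rpow_pow_comm (by positivity)]
    _ ≤ (ℓ / δ) ^ γ := Real.rpow_le_rpow (by positivity) hratio hγ0
    _ = δ ^ (-γ) * ℓ ^ γ := by rw [Real.div_rpow hℓ.le hδ.le, Real.rpow_neg hδ.le]; ring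

section Covering

variable {μ a L x y δ γ : ℝ} {m : ℕ}

theorem mem_cantorMid {p : ℝ} :
    p ∈ cantorMid μ a L m ↔ ∃ σ : Fin m → Bool, p = cantorMidpoint μ a L σ :=
  Iff.rfl

theorem covN_cantorMid_inter_Ioo_le_card (hδ : 0 ≤ δ) (s : Finset (Fin m → Bool))
    (hs : ∀ σ, cantorMidpoint μ a L σ ∈ Ioo x y → σ ∈ s) :
    covN (cantorMid μ a L m ∩ Ioo x y) δ ≤ s.card := by
  refine (covN_le_card (s.image (cantorMidpoint μ a L)) ?_).trans Finset.card_image_le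
  rintro _ ⟨hp, hpI⟩
  obtain ⟨σ, rfl⟩ := mem_cantorMid.mp hp
  exact mem_biUnion (Finset.mem_image_of_mem _ (hs σ hpI)) ⟨le_rfl, le_add_of_nonneg_right hδ⟩

theorem covN_cantorMid_inter_Ioo_le_of_le (hμ : 0 < μ) (hμ2 : μ ≤ 1 / 2) (hL : 0 < L)
    (hγ : γ = Real.log 2 / Real.log (1 / μ)) (hδ : 0 < δ) (hδI : δ < y - x) (hIL : y - x ≤ L)
    (hm : μ ^ m * L ≤ δ) :
    (covN (cantorMid μ a L m ∩ Ioo x y) δ : ℝ) ≤ 8 * δ ^ (-γ) * (y - x) ^ γ := by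
  have hμ1 : μ < 1 := by linarith
  -- the first generations `k` and `j` whose intervals are no longer than `δ`, resp. `y - x`
  obtain ⟨k, hkm, hkδ, hk_min⟩ := exists_minimal_pow_mul_le hm
  obtain ⟨j, hjk, hjI, hj_min⟩ := exists_minimal_pow_mul_le (hkδ.trans hδI.le)
  have hk : k ≠ 0 := by rintro rfl; rw [pow_zero, one_mul] at hkδ; linarith
  have hcover : covN (cantorMid μ a L m ∩ Ioo x y) δ ≤ (meetingCodes μ a L x y k).card := by
    refine (covN_le_card ((meetingCodes μ a L x y k).image (cantorLeft μ a L)) ?_).trans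
      Finset.card_image_le
    rintro _ ⟨hp, hpI⟩
    obtain ⟨σ, rfl⟩ := mem_cantorMid.mp hp
    obtain ⟨τ, hστ⟩ := exists_cantorInterval_superset (a := a) hμ.le hμ1.le hL.le hkm σ
    have hpτ := hστ (cantorMidpoint_mem_cantorInterval hμ.le hL.le σ)
    exact mem_biUnion (Finset.mem_image_of_mem _ (mem_meetingCodes.mpr ⟨_, hpτ, hpI⟩))
      ⟨hpτ.1, hpτ.2.trans (by linarith)⟩
  have hδn : δ ≤ μ ^ (k - 1 - j) * (y - x) := by
    rcases le_or_gt j (k - 1) with hj | hj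
    · exact (hk_min (k - 1) (by omega)).le.trans (pow_mul_le_pow_sub_mul hμ.le hj hjI)
    · rw [Nat.sub_eq_zero_of_le hj.le, pow_zero, one_mul]
      exact hδI.le
  have hpow : (2 : ℝ) ^ (k - j) ≤ 2 * 2 ^ (k - 1 - j) := by
    rw [← pow_succ']
    exact pow_le_pow_right₀ one_le_two (by omega)
  calc (covN (cantorMid μ a L m ∩ Ioo x y) δ : ℝ) ≤ 4 * 2 ^ (k - j) := by
        exact_mod_cast hcover.trans (card_meetingCodes_le_four_mul hμ hμ2 hL hjk hj_min)
    _ ≤ 4 * (2 * (δ ^ (-γ) * (y - x) ^ γ)) := by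
        gcongr
        exact hpow.trans (by gcongr; exact two_pow_le_rpow_neg_mul_rpow hμ hμ1 hγ hδ hδn)
    _ = 8 * δ ^ (-γ) * (y - x) ^ γ := by ring

theorem covN_cantorMid_inter_Ioo_le_of_ge (hμ : 0 < μ) (hμ2 : μ ≤ 1 / 2) (hL : 0 < L)
    (hγ : γ = Real.log 2 / Real.log (1 / μ)) (hδ : 0 ≤ δ) (hm : μ ^ m * L ≤ y - x) :
    (covN (cantorMid μ a L m ∩ Ioo x y) δ : ℝ) ≤ 4 * (μ ^ m * L) ^ (-γ) * (y - x) ^ γ := by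
  obtain ⟨j, hjm, hjI, hj_min⟩ := exists_minimal_pow_mul_le hm
  have hcover : covN (cantorMid μ a L m ∩ Ioo x y) δ ≤ (meetingCodes μ a L x y m).card :=
    covN_cantorMid_inter_Ioo_le_card hδ _ fun σ hσ =>
      mem_meetingCodes.mpr ⟨_, cantorMidpoint_mem_cantorInterval hμ.le hL.le σ, hσ⟩
  have hpow := two_pow_le_rpow_neg_mul_rpow hμ (by linarith) hγ (by positivity)
    (pow_mul_le_pow_sub_mul hμ.le hjm hjI)
  calc (covN (cantorMid μ a L m ∩ Ioo x y) δ : ℝ) ≤ 4 * 2 ^ (m - j) := by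
        exact_mod_cast hcover.trans (card_meetingCodes_le_four_mul hμ hμ2 hL hjm hj_min)
    _ ≤ 4 * ((μ ^ m * L) ^ (-γ) * (y - x) ^ γ) := by gcongr
    _ = 4 * (μ ^ m * L) ^ (-γ) * (y - x) ^ γ := by ring

theorem covN_cantorMid_inter_Ioo_le_one (hμ : 0 < μ) (hμ2 : μ ≤ 1 / 2) (hL : 0 < L)
    (hδ : 0 ≤ δ) (h : y - x < μ ^ m * L) : covN (cantorMid μ a L m ∩ Ioo x y) δ ≤ 1 := by
  classical
  refine (covN_cantorMid_inter_Ioo_le_card hδ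
    (Finset.univ.filter fun σ => cantorMidpoint μ a L σ ∈ Ioo x y) fun σ hσ => by simpa).trans ?_
  refine Finset.card_le_of_le_abs_sub (f := cantorMidpoint μ a L) (d := μ ^ m * L) (u := x)
    (n := 1) (by positivity) (fun σ _ τ _ hne => ?_) fun σ hσ => ?_
  · rw [cantorMidpoint, cantorMidpoint, add_sub_add_right_eq_sub]
    exact pow_mul_le_abs_cantorLeft_sub hμ.le hμ2 hL.le hne
  · obtain ⟨hx, hy⟩ := (Finset.mem_filter.mp hσ).2
    exact ⟨hx.le, by push_cast; linarith⟩

end Covering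

/-- Localized covering-number bounds for the midpoint Cantor set: for every open
subinterval `I = (x,y) ⊆ J = [a, a+L]` and every `δ ∈ (0,|I|)`, with `δ_m = μ^m L` and
`γ = log 2 / log(1/μ)`:
`N ≤ 8 δ^{-γ} |I|^γ` if `δ_m ≤ δ ≤ |I|`; `N ≤ 4 δ_m^{-γ} |I|^γ` if `δ ≤ δ_m ≤ |I|`;
and `N ≤ 1` if `|I| < δ_m`. -/
theorem stmt5 (μ : ℝ) (hμ : 0 < μ) (hμ2 : μ ≤ 1/2) (a L : ℝ) (hL : 0 < L) (m : ℕ)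
    (γ : ℝ) (hγ : γ = Real.log 2 / Real.log (1/μ))
    (x y : ℝ) (hx : a ≤ x) (hy : y ≤ a + L)
    (δ : ℝ) (hδ : 0 < δ) (hδI : δ < y - x) :
    (μ ^ m * L ≤ δ →
      (covN (cantorMid μ a L m ∩ Set.Ioo x y) δ : ℝ) ≤ 8 * δ ^ (-γ) * (y - x) ^ γ) ∧
    (δ ≤ μ ^ m * L → μ ^ m * L ≤ y - x →
      (covN (cantorMid μ a L m ∩ Set.Ioo x y) δ : ℝ) ≤ 4 * (μ ^ m * L) ^ (-γ) * (y - x) ^ γ) ∧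
    (y - x < μ ^ m * L →
      covN (cantorMid μ a L m ∩ Set.Ioo x y) δ ≤ 1) := by
  have hIL : y - x ≤ L := by linarith
  exact ⟨covN_cantorMid_inter_Ioo_le_of_le hμ hμ2 hL hγ hδ hδI hIL,
    fun _ => covN_cantorMid_inter_Ioo_le_of_ge hμ hμ2 hL hγ hδ.le,
    covN_cantorMid_inter_Ioo_le_one hμ hμ2 hL hδ.le⟩
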